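/- Let G = ⟨A, R⟩ be an AF and h a local expansion operator. Then S_cf(G) = S_cf(h(G)) if and only if for every attack (a, b) ∈ h(R), either (a, b) ∈ R or (b, a) ∈ R, or there is no conflict-free set of G containing both a and b. -/
import Mathlib


def conflictFree {α : Type*} (R : α → α → Prop) (E : Set α) : Prop :=
  ∀ a ∈ E, ∀ b ∈ E, ¬ R a b

/-- Invariance characterization for conflict-free sets: the conflict-free sets of
`G` and of the expansion `h(G)` coincide iff every attack `(a,b)` of `h(R)` is
either already a conflict in `R` (in some direction) or connects two arguments
that never appear together in a conflict-free set of `G`. -/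
theorem invariant_cf_iff {α : Type*} (R hR : α → α → Prop)
    (hexp : ∀ a b, R a b → hR a b) :
    (∀ E : Set α, conflictFree R E ↔ conflictFree hR E) ↔
      (∀ a b, hR a b →
        (R a b ∨ R b a) ∨ ¬ ∃ E : Set α, conflictFree R E ∧ a ∈ E ∧ b ∈ E) := by
  constructor
  · intro h a b hab
    by_contra hc
    push_neg at hc
    obtain ⟨hnR, E, hcf, haE, hbE⟩ := hc
    exact (h E).mp hcf a haE b hbE hab
  · intro h E
    constructor
    · intro hcf a haE b hbE hab
      rcases h a b hab with hR | hne
      · rcases hR with h1 | h1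
        · exact hcf a haE b hbE h1
        · exact hcf b hbE a haE h1
      · exact hne ⟨E, hcf, haE, hbE⟩
    · intro hcf a haE b hbE hab
      exact hcf a haE b hbE (hexp a b hab)
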